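/- Let Γ be an (additive) abelian group and let χ : Γ × Γ → ℤ be a bi-additive antisymmetric form (χ(v,w) = −χ(w,v) for all v,w). Then for all u, v, w ∈ Γ the cyclic sum (−1)^{χ(u,v)+χ(u+v,w)}·χ(u,v)·χ(u+v,w) + (−1)^{χ(v,w)+χ(v+w,u)}·χ(v,w)·χ(v+w,u) + (−1)^{χ(w,u)+χ(w+u,v)}·χ(w,u)·χ(w+u,v) equals 0 (as an integer). Equivalently, the bracket [c_v, c_w] := (−1)^{χ(v,w)}·χ(v,w)·c_{v+w}, extended ℚ-bilinearly to the free ℚ-vector space with basis {c_v : v ∈ Γ}, satisfies the Jacobi identity, so it defines a Lie algebra structure on this vector space. -/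
import Mathlib

/-- The Joyce–Song bracket `[c_v, c_w] = (−1)^{χ(v,w)} χ(v,w) c_{v+w}` associated to an
antisymmetric bi-additive form `χ` on an abelian group `Γ` satisfies the Jacobi identity:
the cyclic sum of the structure constants vanishes. -/
theorem joyce_song_bracket_jacobi {Γ : Type*} [AddCommGroup Γ]
    (χ : Γ → Γ → ℤ)
    (hadd_left : ∀ u v w : Γ, χ (u + v) w = χ u w + χ v w)
    (hadd_right : ∀ u v w : Γ, χ u (v + w) = χ u v + χ u w)
    (hanti : ∀ v w : Γ, χ v w = -χ w v)
    (u v w : Γ) :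
    ((χ u v + χ (u + v) w).negOnePow : ℤ) * (χ u v * χ (u + v) w)
      + ((χ v w + χ (v + w) u).negOnePow : ℤ) * (χ v w * χ (v + w) u)
      + ((χ w u + χ (w + u) v).negOnePow : ℤ) * (χ w u * χ (w + u) v) = 0 := by
  set a := χ u v with ha
  set b := χ v w with hb
  set c := χ w u with hc
  have h1 : χ (u + v) w = b - c := by
    rw [hadd_left, hanti u w, ← hc, ← hb]; ring
  have h2 : χ (v + w) u = c - a := by
    rw [hadd_left, hanti v u, ← ha, ← hc]; ring
  have h3 : χ (w + u) v = a - b := by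
    rw [hadd_left, hanti w v, ← hb, ← ha]; ring
  rw [h1, h2, h3]
  have e1 : (a + (b - c)).negOnePow = (a + b + c).negOnePow := by
    rw [Int.negOnePow_eq_iff]; exact ⟨-c, by ring⟩
  have e2 : (b + (c - a)).negOnePow = (a + b + c).negOnePow := by
    rw [Int.negOnePow_eq_iff]; exact ⟨-a, by ring⟩
  have e3 : (c + (a - b)).negOnePow = (a + b + c).negOnePow := by
    rw [Int.negOnePow_eq_iff]; exact ⟨-b, by ring⟩
  rw [e1, e2, e3]; ring
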